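/- Let u := x_{−i_1}(z_1)⋯x_{−i_N}(z_N), where (i_1,…,i_N) = i_0 and z_1,…,z_N ∈ K^×; note u is lower triangular and invertible. Let L be lower unitriangular and V upper unitriangular with (w̄_0·u^T)^{−1} = L·V, and set u_1 := (w̄_0·V^{−1}·w̄_0^{−1})^T. Let d = diag(d_1,…,d_n) with d_1,…,d_n ∈ K^×, and let u_2 be an upper unitriangular matrix such that b := u_1·d·w̄_0·u_2 is lower triangular. Then b_{n+1−j, n+1−j} = d_j·u_{jj} for every j = 1,…,n; that is, the diagonal part of b equals w̄_0·d·[u]_0·w̄_0^{−1}, where [u]_0 denotes the diagonal part of u. -/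

import Mathlib

open Matrix

noncomputable section

variable {K : Type*} [Field K]

/-- `x_i(z)`: identity except entry `z` in (1-based) position `(i, i+1)`. -/
def xMat (n i : ℕ) (z : K) : Matrix (Fin n) (Fin n) K :=
  Matrix.of fun a b => if (a : ℕ) = (b : ℕ) then 1
    else if (a : ℕ) + 1 = i ∧ (b : ℕ) = i then z else 0

/-- `y_i(z)`: identity except entry `z` in (1-based) position `(i+1, i)`. -/
def yMat (n i : ℕ) (z : K) : Matrix (Fin n) (Fin n) K :=
  Matrix.of fun a b => if (a : ℕ) = (b : ℕ) then 1
    else if (a : ℕ) = i ∧ (b : ℕ) + 1 = i then z else 0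

/-- `x_{-i}(z)`: identity except the 2×2 submatrix in (1-based) rows/columns `i, i+1`
is `((z⁻¹, 0), (1, z))`. -/
def xnegMat (n i : ℕ) (z : K) : Matrix (Fin n) (Fin n) K :=
  Matrix.of fun a b =>
    if (a : ℕ) + 1 = i ∧ (b : ℕ) + 1 = i then z⁻¹
    else if (a : ℕ) = i ∧ (b : ℕ) = i then z
    else if (a : ℕ) = i ∧ (b : ℕ) + 1 = i then 1
    else if (a : ℕ) = (b : ℕ) then 1
    else 0

/-- `s̄_i := x_i(-1) · y_i(1) · x_i(-1)`. -/
def sbar (n i : ℕ) : Matrix (Fin n) (Fin n) K :=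
  xMat n i (-1) * yMat n i 1 * xMat n i (-1)

/-- The reduced expression `i₀ = (1,2,…,n-1, 1,2,…,n-2, …, 1,2, 1)` for `w₀`. -/
def i0List (n : ℕ) : List ℕ :=
  ((List.range (n - 1)).map fun j => List.range' 1 (n - 1 - j)).foldr (· ++ ·) []

/-- The reduced expression `i₀' = (n-1,…,1, n-1,…,2, …, n-1,n-2, n-1)` for `w₀`. -/
def i0'List (n : ℕ) : List ℕ :=
  ((List.range (n - 1)).map fun j => (List.range' (1 + j) (n - 1 - j)).reverse).foldr (· ++ ·) []

/-- The matrix `w̄₀ = s̄_{i_1} ⋯ s̄_{i_N}` (computed along `i₀`; it is independent of the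
choice of reduced expression). -/
def w0Mat (n : ℕ) : Matrix (Fin n) (Fin n) K :=
  ((i0List n).map fun i => sbar n i).prod

/-- `x_{-i_1}(z_1) ⋯ x_{-i_N}(z_N)` along the word `l` (with 1-based coordinates `z`). -/
def xnegProd (n : ℕ) (l : List ℕ) (z : ℕ → K) : Matrix (Fin n) (Fin n) K :=
  ((List.range l.length).map fun r => xnegMat n (l.getD r 0) (z (r + 1))).prod

/-- `x_{i_1}(p_1) ⋯ x_{i_N}(p_N)` along the word `l`. -/
def xProd (n : ℕ) (l : List ℕ) (p : ℕ → K) : Matrix (Fin n) (Fin n) K :=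
  ((List.range l.length).map fun r => xMat n (l.getD r 0) (p (r + 1))).prod

/-- `y_{i_1}(q_1) ⋯ y_{i_N}(q_N)` along the word `l`. -/
def yProd (n : ℕ) (l : List ℕ) (q : ℕ → K) : Matrix (Fin n) (Fin n) K :=
  ((List.range l.length).map fun r => yMat n (l.getD r 0) (q (r + 1))).prod

/-- The adjacent transposition `σ_i` (swapping `i` and `i+1`), as a function on `ℕ`. -/
def sigmaFun (i : ℕ) : ℕ → ℕ := fun k => if k = i then i + 1 else if k = i + 1 then i else k

/-- `σ_{i_1} ∘ σ_{i_2} ∘ ⋯ ∘ σ_{i_N}` (rightmost factor applied first). -/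
def wordPerm (l : List ℕ) : ℕ → ℕ := l.foldr (fun i f => sigmaFun i ∘ f) id

/-- A reduced expression for the longest element `w₀` of `Sₙ`. -/
def IsReducedWord (n : ℕ) (l : List ℕ) : Prop :=
  l.length = n * (n - 1) / 2 ∧ (∀ i ∈ l, 1 ≤ i ∧ i ≤ n - 1) ∧
    ∀ k, 1 ≤ k → k ≤ n → wordPerm l k = n + 1 - k

/-- Lower unitriangular. -/
def IsLowerUni {n : ℕ} (M : Matrix (Fin n) (Fin n) K) : Prop :=
  (∀ i, M i i = 1) ∧ ∀ i j : Fin n, i < j → M i j = 0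

/-- Upper unitriangular. -/
def IsUpperUni {n : ℕ} (M : Matrix (Fin n) (Fin n) K) : Prop :=
  (∀ i, M i i = 1) ∧ ∀ i j : Fin n, j < i → M i j = 0

/-- `s_k := Σ_{j=1}^{k-1} (n - j)`. -/
def sIdx (n k : ℕ) : ℕ := ∑ j ∈ Finset.range (k - 1), (n - (j + 1))

/-!
Right multiplication by `s̄_i` replaces the adjacent columns `(P, Q)` by `(Q, -P)`, so `w̄₀` is
the signed antidiagonal matrix with `w̄₀ (rev b) b = (-1)^b`. Hence `w̄₀ᵀ = w̄₀⁻¹ = ±w̄₀`, and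
`M ↦ w̄₀ᵀ M w̄₀` reverses rows and columns up to sign, exchanging lower and upper triangular
matrices. From `(w̄₀ uᵀ)⁻¹ = L V` we get `V⁻¹ = w̄₀ uᵀ L`, so `u₁ = w̄₀ᵀ Lᵀ u` and
`b = (w̄₀ᵀ Lᵀ w̄₀) (w̄₀ᵀ u d w̄₀) u₂`: lower unitriangular times upper triangular times upper
unitriangular. As `b` is lower triangular, the diagonal of `b` is the diagonal of the middle
factor, which is `u d` read backwards.
-/

namespace Matrix

variable {m α R : Type*} [Fintype m]

lemma mul_one_add_single_apply [DecidableEq m] [NonAssocSemiring R]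
    (M : Matrix m m R) (i j : m) (c : R) (a b : m) :
    (M * (1 + single i j c)) a b = M a b + if b = j then M a i * c else 0 := by
  rw [Matrix.mul_add, Matrix.mul_one, Matrix.add_apply]
  split_ifs with h
  · rw [h, mul_single_apply_same]
  · rw [mul_single_apply_of_ne (hbj := h)]

lemma BlockTriangular.mul_apply_self [LinearOrder α] [NonUnitalNonAssocSemiring R]
    {M N : Matrix m m R} {b : m → α} (hb : Function.Injective b)
    (hM : M.BlockTriangular b) (hN : N.BlockTriangular b) (i : m) :
    (M * N) i i = M i i * N i i := by
  refine Fintype.sum_eq_single i fun k hk => ?_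
  show M i k * N k i = 0
  rcases lt_or_gt_of_ne (hb.ne hk) with h | h
  · rw [hM h, zero_mul]
  · rw [hN h, mul_zero]

variable [LinearOrder m] [CommRing R]

lemma det_eq_one_of_isLowerTriangular {L : Matrix m m R} (hL : L.IsLowerTriangular)
    (hL₁ : ∀ i, L i i = 1) : L.det = 1 := by
  rw [det_of_isLowerTriangular L hL]
  exact Finset.prod_eq_one fun i _ => hL₁ i

lemma det_eq_one_of_isUpperTriangular {U : Matrix m m R} (hU : U.IsUpperTriangular)
    (hU₁ : ∀ i, U i i = 1) : U.det = 1 := by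
  rw [det_of_isUpperTriangular hU]
  exact Finset.prod_eq_one fun i _ => hU₁ i

lemma diag_eq_of_eq_mul_mul {B L T U : Matrix m m R}
    (hB : B.IsLowerTriangular) (hL : L.IsLowerTriangular) (hL₁ : ∀ i, L i i = 1)
    (hT : T.IsUpperTriangular) (hU : U.IsUpperTriangular) (hU₁ : ∀ i, U i i = 1)
    (h : B = L * T * U) : B.diag = T.diag := by
  have : Invertible L := L.invertibleOfIsUnitDet <| by
    rw [det_eq_one_of_isLowerTriangular hL hL₁]
    exact isUnit_one
  have hLinv : L⁻¹.IsLowerTriangular := blockTriangular_inv_of_blockTriangular hL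
  have hLinv₁ (i : m) : L⁻¹ i i = 1 := by
    have := congr_fun₂ (inv_mul_of_invertible L) i i
    rwa [hLinv.mul_apply_self OrderDual.toDual.injective hL, hL₁, mul_one, one_apply_eq] at this
  have hLU : L⁻¹ * B = T * U := by rw [h, Matrix.mul_assoc, inv_mul_cancel_left_of_invertible]
  funext i
  show B i i = T i i
  have := congr_fun₂ hLU i i
  rwa [hLinv.mul_apply_self OrderDual.toDual.injective hB,
    hT.mul_apply_self Function.injective_id hU, hLinv₁, hU₁, one_mul, mul_one] at this

end Matrix

section

variable {n : ℕ}

lemma xMat_eq_one_add_single (p : ℕ) (hp : p + 1 < n) (c : K) :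
    xMat n (p + 1) c = 1 + single ⟨p, by omega⟩ ⟨p + 1, hp⟩ c := by
  ext a b
  simp only [xMat, of_apply, Matrix.add_apply, one_apply, single_apply, Fin.ext_iff]
  grind

lemma yMat_eq_one_add_single (p : ℕ) (hp : p + 1 < n) (c : K) :
    yMat n (p + 1) c = 1 + single ⟨p + 1, hp⟩ ⟨p, by omega⟩ c := by
  ext a b
  simp only [yMat, of_apply, Matrix.add_apply, one_apply, single_apply, Fin.ext_iff]
  grind

lemma mul_sbar_apply (p : ℕ) (hp : p + 1 < n) (M : Matrix (Fin n) (Fin n) K) (a b : Fin n) :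
    (M * sbar n (p + 1) : Matrix (Fin n) (Fin n) K) a b =
      if (b : ℕ) = p then M a ⟨p + 1, hp⟩
      else if (b : ℕ) = p + 1 then -M a ⟨p, by omega⟩
      else M a b := by
  obtain ⟨b, hb⟩ := b
  simp only [sbar, ← Matrix.mul_assoc, xMat_eq_one_add_single p hp,
    yMat_eq_one_add_single p hp, mul_one_add_single_apply, Fin.mk.injEq]
  split_ifs <;> subst_vars <;> first | omega | ring

lemma mul_prod_sbar_range'_apply (m : ℕ) (hm : m < n) (M : Matrix (Fin n) (Fin n) K)
    (a b : Fin n) :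
    (M * ((List.range' 1 m).map (sbar (K := K) n)).prod) a b =
      if h : (b : ℕ) < m then M a ⟨b + 1, by omega⟩
      else if (b : ℕ) = m then (-1) ^ m * M a ⟨0, by omega⟩
      else M a b := by
  induction m generalizing b with
  | zero =>
    rw [List.range'_zero, List.map_nil, List.prod_nil, Matrix.mul_one]
    split_ifs <;> grind
  | succ m ih =>
    rw [List.range'_concat, List.map_append, List.prod_append, ← Matrix.mul_assoc,
      List.map_singleton, List.prod_singleton, show 1 + 1 * m = m + 1 by omega,
      mul_sbar_apply m hm]
    simp only [ih (by omega)]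
    split_ifs <;> grind

lemma i0List_succ_succ (t : ℕ) : i0List (t + 2) = List.range' 1 (t + 1) ++ i0List (t + 1) := by
  rw [i0List, i0List, show t + 2 - 1 = t + 1 from rfl, List.range_succ_eq_map]
  simp only [List.map_cons, List.map_map, List.foldr_cons]
  congr 2
  refine List.map_congr_left fun j _ => ?_
  simp only [Function.comp_apply]
  congr 1
  omega

lemma mul_prod_sbar_i0List_apply (t : ℕ) (ht : t < n) (M : Matrix (Fin n) (Fin n) K)
    (a b : Fin n) :
    (M * ((i0List (t + 1)).map (sbar (K := K) n)).prod) a b =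
      if h : (b : ℕ) ≤ t then (-1) ^ (b : ℕ) * M a ⟨t - b, by omega⟩ else M a b := by
  induction t generalizing M with
  | zero =>
    rw [show i0List 1 = [] from rfl, List.map_nil, List.prod_nil, Matrix.mul_one]
    split_ifs with hb
    · obtain rfl : b = ⟨0, ht⟩ := Fin.ext (Nat.le_zero.mp hb)
      simp
    · rfl
  | succ t ih =>
    rw [i0List_succ_succ, List.map_append, List.prod_append, ← Matrix.mul_assoc,
      ih (by omega)]
    simp only [mul_prod_sbar_range'_apply (t + 1) ht]
    split_ifs <;> grind

lemma w0Mat_apply (a b : Fin n) :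
    w0Mat (K := K) n a b = if a = b.rev then (-1) ^ (b : ℕ) else 0 := by
  obtain _ | t := n
  · exact b.elim0
  rw [w0Mat, ← Matrix.one_mul (List.prod _), mul_prod_sbar_i0List_apply t (by omega),
    dif_pos (Nat.lt_succ_iff.mp b.isLt), one_apply]
  split_ifs <;> grind

lemma transpose_w0Mat_mul_w0Mat : ((w0Mat n)ᵀ * w0Mat n : Matrix (Fin n) (Fin n) K) = 1 := by
  ext a b
  simp only [Matrix.mul_apply, transpose_apply, w0Mat_apply, mul_ite, ite_mul, ← pow_add,
    zero_mul, mul_zero, Finset.sum_ite_eq', Finset.mem_univ, if_true, Fin.rev_inj, one_apply]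
  rcases eq_or_ne a b with rfl | h
  · simp [Even.neg_one_pow ⟨_, rfl⟩]
  · simp [h, Ne.symm h]

lemma w0Mat_mul_transpose_w0Mat : (w0Mat n * (w0Mat n)ᵀ : Matrix (Fin n) (Fin n) K) = 1 :=
  mul_eq_one_comm.mp transpose_w0Mat_mul_w0Mat

lemma transpose_w0Mat : (w0Mat (K := K) n)ᵀ = (-1 : K) ^ (n - 1) • w0Mat n := by
  ext a b
  simp only [transpose_apply, w0Mat_apply, Matrix.smul_apply, smul_eq_mul, mul_ite, mul_zero,
    ← Fin.rev_eq_iff, eq_comm (a := b)]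
  split_ifs with h
  · subst h
    rw [← pow_add, Fin.val_rev, show n - 1 + (n - (a + 1)) = a + 2 * (n - (a + 1)) by omega,
      pow_add, pow_mul, neg_one_sq, one_pow, mul_one]
  · rfl

lemma transpose_w0Mat_mul_mul_w0Mat_apply (M : Matrix (Fin n) (Fin n) K) (a b : Fin n) :
    ((w0Mat n)ᵀ * M * w0Mat n : Matrix (Fin n) (Fin n) K) a b
      = (-1) ^ ((a : ℕ) + b) * M a.rev b.rev := by
  simp only [Matrix.mul_apply, transpose_apply, w0Mat_apply, ite_mul, zero_mul,
    Finset.sum_ite_eq', Finset.mem_univ, if_true, mul_ite, mul_zero, pow_add]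
  ring

lemma isUpperTriangular_transpose_w0Mat_mul_mul_w0Mat {M : Matrix (Fin n) (Fin n) K}
    (hM : M.IsLowerTriangular) :
    ((w0Mat n)ᵀ * M * w0Mat n : Matrix (Fin n) (Fin n) K).IsUpperTriangular := fun a b h => by
  rw [transpose_w0Mat_mul_mul_w0Mat_apply, @hM a.rev b.rev (Fin.rev_lt_rev.mpr h), mul_zero]

lemma isLowerTriangular_transpose_w0Mat_mul_mul_w0Mat {M : Matrix (Fin n) (Fin n) K}
    (hM : M.IsUpperTriangular) :
    ((w0Mat n)ᵀ * M * w0Mat n : Matrix (Fin n) (Fin n) K).IsLowerTriangular := fun a b h => by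
  rw [transpose_w0Mat_mul_mul_w0Mat_apply, @hM a.rev b.rev (Fin.rev_lt_rev.mpr h), mul_zero]

lemma transpose_w0Mat_conj_inv_eq {u L V : Matrix (Fin n) (Fin n) K}
    (hLV : (w0Mat n * uᵀ)⁻¹ = L * V) (hdet : IsUnit (L * V).det) :
    (w0Mat n * V⁻¹ * (w0Mat (K := K) n)⁻¹)ᵀ = (w0Mat n)ᵀ * Lᵀ * u := by
  have hunit : IsUnit (w0Mat n * uᵀ).det := isUnit_nonsing_inv_det_iff.mp (hLV ▸ hdet)
  have hVinv : V⁻¹ = w0Mat n * uᵀ * L :=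
    inv_eq_left_inv (by rw [Matrix.mul_assoc, ← hLV, mul_nonsing_inv _ hunit])
  have hWinv : (w0Mat (K := K) n)⁻¹ = (w0Mat n)ᵀ := inv_eq_left_inv transpose_w0Mat_mul_w0Mat
  have hWW : ((w0Mat n)ᵀ * (w0Mat n)ᵀ : Matrix (Fin n) (Fin n) K) = (-1 : K) ^ (n - 1) • 1 := by
    nth_rw 2 [transpose_w0Mat]
    rw [Matrix.mul_smul, transpose_w0Mat_mul_w0Mat]
  rw [hVinv, hWinv]
  simp only [transpose_mul, transpose_transpose, Matrix.mul_assoc]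
  rw [hWW, transpose_w0Mat]
  simp only [Matrix.mul_smul, Matrix.smul_mul, Matrix.mul_one]

lemma isLowerTriangular_xnegMat (i : ℕ) (c : K) : (xnegMat n i c).IsLowerTriangular := by
  intro a b h
  change a < b at h
  simp only [xnegMat, of_apply]
  grind

lemma isLowerTriangular_xnegProd (l : List ℕ) (z : ℕ → K) :
    (xnegProd n l z).IsLowerTriangular := by
  refine List.prod_induction _ (fun _ _ => BlockTriangular.mul) blockTriangular_one ?_
  simp only [List.mem_map]
  rintro _ ⟨r, -, rfl⟩
  exact isLowerTriangular_xnegMat _ _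

lemma IsLowerUni.isLowerTriangular {M : Matrix (Fin n) (Fin n) K} (hM : IsLowerUni M) :
    M.IsLowerTriangular :=
  fun i j h => hM.2 i j h

lemma IsUpperUni.isUpperTriangular {M : Matrix (Fin n) (Fin n) K} (hM : IsUpperUni M) :
    M.IsUpperTriangular :=
  fun i j h => hM.2 i j h

lemma IsLowerUni.isUpperTriangular_transpose {M : Matrix (Fin n) (Fin n) K} (hM : IsLowerUni M) :
    Mᵀ.IsUpperTriangular :=
  fun i j h => hM.2 j i h

end

theorem stmt1_general (n : ℕ) (z : ℕ → K)
    (u : Matrix (Fin n) (Fin n) K) (hu : u = xnegProd n (i0List n) z)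
    (L V : Matrix (Fin n) (Fin n) K) (hL : IsLowerUni L) (hV : IsUpperUni V)
    (hLV : (w0Mat n * uᵀ)⁻¹ = L * V)
    (u1 : Matrix (Fin n) (Fin n) K)
    (hu1 : u1 = (w0Mat n * V⁻¹ * (w0Mat (K := K) n)⁻¹)ᵀ)
    (d : Fin n → K)
    (u2 : Matrix (Fin n) (Fin n) K) (hu2 : IsUpperUni u2)
    (b : Matrix (Fin n) (Fin n) K) (hb : b = u1 * Matrix.diagonal d * w0Mat n * u2)
    (hbl : ∀ i j : Fin n, i < j → b i j = 0) :
    ∀ j : Fin n, b j.rev j.rev = d j * u j j := by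
  have hdet : IsUnit (L * V).det := by
    rw [det_mul, det_eq_one_of_isLowerTriangular hL.isLowerTriangular hL.1,
      det_eq_one_of_isUpperTriangular hV.isUpperTriangular hV.1, mul_one]
    exact isUnit_one
  have hud : (u * diagonal d).IsLowerTriangular :=
    (hu ▸ isLowerTriangular_xnegProd _ _).mul (blockTriangular_diagonal d)
  have hb' : b = ((w0Mat n)ᵀ * Lᵀ * w0Mat n) * ((w0Mat n)ᵀ * (u * diagonal d) * w0Mat n) * u2 := by
    rw [hb, hu1, transpose_w0Mat_conj_inv_eq hLV hdet]
    simp only [Matrix.mul_assoc]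
    rw [← Matrix.mul_assoc (w0Mat n) (w0Mat n)ᵀ, w0Mat_mul_transpose_w0Mat, Matrix.one_mul]
  have hdiag := diag_eq_of_eq_mul_mul (fun i j h => hbl i j h)
    (isLowerTriangular_transpose_w0Mat_mul_mul_w0Mat hL.isUpperTriangular_transpose)
    (fun i => by simp [transpose_w0Mat_mul_mul_w0Mat_apply, hL.1])
    (isUpperTriangular_transpose_w0Mat_mul_mul_w0Mat hud) hu2.isUpperTriangular hu2.1 hb'
  intro j
  rw [← diag_apply b, hdiag, diag_apply, transpose_w0Mat_mul_mul_w0Mat_apply, Fin.rev_rev,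
    mul_diagonal, Even.neg_one_pow ⟨_, rfl⟩, one_mul, mul_comm]

theorem stmt1 (n : ℕ) (hn : 2 ≤ n) (z : ℕ → K)
    (hz : ∀ k, 1 ≤ k → k ≤ n * (n - 1) / 2 → z k ≠ 0)
    (u : Matrix (Fin n) (Fin n) K) (hu : u = xnegProd n (i0List n) z)
    (L V : Matrix (Fin n) (Fin n) K) (hL : IsLowerUni L) (hV : IsUpperUni V)
    (hLV : (w0Mat n * uᵀ)⁻¹ = L * V)
    (u1 : Matrix (Fin n) (Fin n) K)
    (hu1 : u1 = (w0Mat n * V⁻¹ * (w0Mat (K := K) n)⁻¹)ᵀ)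
    (d : Fin n → K) (hd : ∀ j, d j ≠ 0)
    (u2 : Matrix (Fin n) (Fin n) K) (hu2 : IsUpperUni u2)
    (b : Matrix (Fin n) (Fin n) K) (hb : b = u1 * Matrix.diagonal d * w0Mat n * u2)
    (hbl : ∀ i j : Fin n, i < j → b i j = 0) :
    ∀ j : Fin n, b j.rev j.rev = d j * u j j :=
  stmt1_general n z u hu L V hL hV hLV u1 hu1 d u2 hu2 b hb hbl
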